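/- Under the setup of the dissipative spin system (v̇ᵢ = σᵢ × vᵢ, σ̇ᵢ = (J nᵢ vᵢ × w − αᵢ σᵢ × vᵢ)/v² − η σᵢ, w = (1/N)Σⱼ nⱼvⱼ, |vᵢ| = v, vᵢ·σᵢ = 0, nᵢ, η, J > 0), if the initial energy satisfies E(0) < J m²/(2N) with m = Σᵢ nᵢ, then |w(t)|² ≥ |w(0)|² − (v²/(JN)) Σᵢ |σᵢ(0)|² > 0 for all t ≥ 0; in particular |w(t)| is bounded below by a positive constant uniformly in time. -/

import Mathlib

open Matrix MeasureTheory

def dot3 (u w : Fin 3 → ℝ) : ℝ := ∑ i, u i * w i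

noncomputable def norm3 (u : Fin 3 → ℝ) : ℝ := Real.sqrt (dot3 u u)

/-! Since every `vᵢ` has length `v`, the alignment potential is
`U = J m²/(2N) − (JN/(2v²))|w|²`. Along the flow the power of the alignment torque on the `σᵢ`
equals the rate of change of `(JN/(2v²))|w|²` (a triple-product identity), and the term
`αᵢ σᵢ × vᵢ` does no work on `σᵢ`, so `E' = −η Σᵢ|σᵢ|² ≤ 0`. Then `E(t) ≤ E(0)` rearranges to
`|w(t)|² ≥ |w(0)|² − (v²/(JN)) Σᵢ|σᵢ(0)|²`, and `E(0) < J m²/(2N)` says the right side is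
positive. -/

lemma dot3_eq_dotProduct (u w : Fin 3 → ℝ) : dot3 u w = u ⬝ᵥ w := rfl

section DotProduct

variable {ι κ 𝕜 R : Type*} [Fintype ι] [Fintype κ] [NontriviallyNormedField 𝕜] [CommRing R]

theorem HasDerivAt.dotProduct {f g : 𝕜 → ι → 𝕜} {f' g' : ι → 𝕜} {t : 𝕜}
    (hf : HasDerivAt f f' t) (hg : HasDerivAt g g' t) :
    HasDerivAt (fun s => f s ⬝ᵥ g s) (f' ⬝ᵥ g t + f t ⬝ᵥ g') t := by
  have h := HasDerivAt.fun_sum (u := Finset.univ) (A := fun i s => f s i * g s i)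
    fun i _ => (hasDerivAt_pi.1 hf i).mul (hasDerivAt_pi.1 hg i)
  simp only [Finset.sum_add_distrib] at h
  exact h

theorem HasDerivAt.dotProduct_self {f : 𝕜 → ι → 𝕜} {f' : ι → 𝕜} {t : 𝕜}
    (hf : HasDerivAt f f' t) :
    HasDerivAt (fun s => f s ⬝ᵥ f s) (2 * (f t ⬝ᵥ f')) t := by
  convert hf.dotProduct hf using 1
  rw [dotProduct_comm f']
  ring

theorem sum_sum_mul_dotProduct_sub_sub (c : κ → R) (x : κ → ι → R) :
    ∑ k, ∑ l, c k * c l * ((x k - x l) ⬝ᵥ (x k - x l)) =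
      2 * (∑ k, c k) * ∑ k, c k * (x k ⬝ᵥ x k) -
        2 * ((∑ k, c k • x k) ⬝ᵥ ∑ k, c k • x k) := by
  have hexpand : ∀ k l, c k * c l * ((x k - x l) ⬝ᵥ (x k - x l)) =
      c l * (c k * (x k ⬝ᵥ x k)) + c k * (c l * (x l ⬝ᵥ x l)) -
        2 * (c k • x k ⬝ᵥ c l • x l) := by
    intro k l
    simp only [sub_dotProduct, dotProduct_sub, smul_dotProduct, dotProduct_smul, smul_eq_mul,
      dotProduct_comm (x l) (x k)]
    ring
  simp only [hexpand, Finset.sum_sub_distrib, Finset.sum_add_distrib, ← Finset.mul_sum,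
    ← Finset.sum_mul, sum_dotProduct, dotProduct_sum]
  rw [Finset.sum_comm (f := fun l k => c k • x k ⬝ᵥ c l • x l)]
  ring

theorem sum_sum_mul_dotProduct_sub_sub_of_dotProduct_self_eq (c : κ → R) {x : κ → ι → R}
    {r : R} (hx : ∀ k, x k ⬝ᵥ x k = r) :
    ∑ k, ∑ l, c k * c l * ((x k - x l) ⬝ᵥ (x k - x l)) =
      2 * r * (∑ k, c k) ^ 2 - 2 * ((∑ k, c k • x k) ⬝ᵥ ∑ k, c k • x k) := by
  simp only [sum_sum_mul_dotProduct_sub_sub, hx, ← Finset.sum_mul]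
  ring

end DotProduct

theorem dotProduct_spin_force (a b c η : ℝ) (v σ w : Fin 3 → ℝ) :
    σ ⬝ᵥ (a • (b • (v ⨯₃ w) - c • (σ ⨯₃ v)) - η • σ) =
      a * b * (w ⬝ᵥ σ ⨯₃ v) - η * (σ ⬝ᵥ σ) := by
  have htriple : σ ⬝ᵥ v ⨯₃ w = w ⬝ᵥ σ ⨯₃ v := by
    rw [triple_product_permutation, triple_product_permutation]
  simp only [dotProduct_sub, dotProduct_smul, smul_eq_mul, htriple, dot_self_cross]
  ring

theorem hasDerivAt_spin_energy {N : ℕ} (hN : (N : ℝ) ≠ 0) {v0 : ℝ} (hv0 : v0 ≠ 0)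
    {J η : ℝ} {n α : Fin N → ℝ} {v σ : Fin N → ℝ → Fin 3 → ℝ} {w : ℝ → Fin 3 → ℝ}
    (hw : ∀ t, w t = (N : ℝ)⁻¹ • ∑ i, n i • v i t)
    (hode_v : ∀ i t, HasDerivAt (v i) (σ i t ⨯₃ v i t) t)
    (hode_σ : ∀ i t, HasDerivAt (σ i)
      ((v0 ^ 2)⁻¹ • ((J * n i) • (v i t ⨯₃ w t) - α i • (σ i t ⨯₃ v i t)) - η • σ i t) t)
    (t : ℝ) :
    HasDerivAt (fun s => (1 / 2) * ∑ i, σ i s ⬝ᵥ σ i s - J * N / (2 * v0 ^ 2) * (w s ⬝ᵥ w s))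
      (-η * ∑ i, σ i t ⬝ᵥ σ i t) t := by
  have hw' : HasDerivAt w ((N : ℝ)⁻¹ • ∑ i, n i • (σ i t ⨯₃ v i t)) t := by
    rw [show w = fun s => (N : ℝ)⁻¹ • ∑ i, n i • v i s from funext hw]
    exact (HasDerivAt.fun_sum fun i _ => (hode_v i t).const_smul (n i)).const_smul ((N : ℝ)⁻¹)
  have hσ := HasDerivAt.fun_sum (u := Finset.univ) fun i _ => (hode_σ i t).dotProduct_self
  have h := (hσ.const_mul (1 / 2 : ℝ)).sub (hw'.dotProduct_self.const_mul (J * N / (2 * v0 ^ 2)))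
  refine h.congr_deriv ?_
  simp only [dotProduct_spin_force, dotProduct_smul, dotProduct_sum, smul_eq_mul,
    Finset.mul_sum, ← Finset.sum_sub_distrib]
  refine Finset.sum_congr rfl fun i _ => ?_
  field_simp
  ring

theorem mean_velocity_lower_bound_general
    (N : ℕ) (hN : 0 < N) (v0 J η : ℝ) (hv0 : 0 < v0) (hJ : 0 < J) (hη : 0 < η)
    (n : Fin N → ℝ) (α : Fin N → ℝ)
    (v σ : Fin N → ℝ → Fin 3 → ℝ)
    (w : ℝ → Fin 3 → ℝ) (hw : ∀ t, w t = (N : ℝ)⁻¹ • ∑ i, n i • v i t)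
    (hode_v : ∀ i t, HasDerivAt (v i) (σ i t ⨯₃ v i t) t)
    (hode_σ : ∀ i t, HasDerivAt (σ i)
      ((v0 ^ 2)⁻¹ • ((J * n i) • (v i t ⨯₃ w t) - α i • (σ i t ⨯₃ v i t))
        - η • σ i t) t)
    (hsphere : ∀ i t, dot3 (v i t) (v i t) = v0 ^ 2)
    (U : ℝ → ℝ)
    (hU : ∀ t, U t = J / (4 * N * v0 ^ 2) *
        ∑ i, ∑ j, n i * n j * dot3 (v i t - v j t) (v i t - v j t))
    (E : ℝ → ℝ)
    (hE : ∀ t, E t = (1 / 2) * ∑ i, dot3 (σ i t) (σ i t) + U t)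
    (hE0 : E 0 < J * (∑ i, n i) ^ 2 / (2 * N)) :
    (0 < dot3 (w 0) (w 0) - v0 ^ 2 / (J * N) * ∑ i, dot3 (σ i 0) (σ i 0)) ∧
    (∀ t, 0 ≤ t →
      dot3 (w t) (w t) ≥
        dot3 (w 0) (w 0) - v0 ^ 2 / (J * N) * ∑ i, dot3 (σ i 0) (σ i 0)) := by
  simp only [dot3_eq_dotProduct] at *
  have hN' : (N : ℝ) ≠ 0 := by positivity
  have hc : 0 < J * N / (2 * v0 ^ 2) := by positivity
  have hS : ∀ t, 0 ≤ ∑ i, σ i t ⬝ᵥ σ i t := fun t =>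
    Finset.sum_nonneg fun i _ => Finset.sum_nonneg fun k _ => mul_self_nonneg _
  have hE_eq : ∀ t, E t = (1 / 2) * ∑ i, σ i t ⬝ᵥ σ i t -
      J * N / (2 * v0 ^ 2) * (w t ⬝ᵥ w t) + J * (∑ i, n i) ^ 2 / (2 * N) := by
    intro t
    rw [hE, hU, sum_sum_mul_dotProduct_sub_sub_of_dotProduct_self_eq n (hsphere · t), hw]
    simp only [smul_dotProduct, dotProduct_smul, smul_eq_mul]
    field_simp
    ring
  have hE_deriv : ∀ t, HasDerivAt E (-η * ∑ i, σ i t ⬝ᵥ σ i t) t := fun t => by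
    rw [funext hE_eq]
    exact (hasDerivAt_spin_energy hN' hv0.ne' hw hode_v hode_σ t).add_const _
  have hE_anti : ∀ t, 0 ≤ t → E t ≤ E 0 := fun t ht =>
    antitone_of_deriv_nonpos (fun x => (hE_deriv x).differentiableAt)
      (fun x => by rw [(hE_deriv x).deriv]; nlinarith [hS x]) ht
  have hcoef : v0 ^ 2 / (J * N) = (1 / 2) / (J * N / (2 * v0 ^ 2)) := by
    field_simp
  rw [hcoef]
  refine ⟨?_, fun t ht => ?_⟩
  · rw [sub_pos, div_mul_eq_mul_div, div_lt_iff₀ hc]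
    linarith [hE_eq 0]
  · rw [ge_iff_le, sub_le_iff_le_add, div_mul_eq_mul_div, ← sub_le_iff_le_add', le_div_iff₀ hc]
    linarith [hE_eq 0, hE_eq t, hE_anti t ht, hS t]

/-- If the initial energy of the dissipative inertial spin system satisfies
`E(0) < J m²/(2N)` with `m = Σᵢ nᵢ`, then for all `t ≥ 0`
`|w(t)|² ≥ |w(0)|² − (v²/(JN)) Σᵢ|σᵢ(0)|² > 0`; in particular `|w(t)|` is bounded
below by a positive constant uniformly in time. -/
theorem mean_velocity_lower_bound
    (N : ℕ) (hN : 0 < N) (v0 J η : ℝ) (hv0 : 0 < v0) (hJ : 0 < J) (hη : 0 < η)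
    (n : Fin N → ℝ) (hn : ∀ i, 0 < n i) (α : Fin N → ℝ)
    (v σ : Fin N → ℝ → Fin 3 → ℝ)
    (w : ℝ → Fin 3 → ℝ) (hw : ∀ t, w t = (N : ℝ)⁻¹ • ∑ i, n i • v i t)
    (hode_v : ∀ i t, HasDerivAt (v i) (σ i t ⨯₃ v i t) t)
    (hode_σ : ∀ i t, HasDerivAt (σ i)
      ((v0 ^ 2)⁻¹ • ((J * n i) • (v i t ⨯₃ w t) - α i • (σ i t ⨯₃ v i t))
        - η • σ i t) t)
    (hsphere : ∀ i t, dot3 (v i t) (v i t) = v0 ^ 2)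
    (horth : ∀ i t, dot3 (v i t) (σ i t) = 0)
    (U : ℝ → ℝ)
    (hU : ∀ t, U t = J / (4 * N * v0 ^ 2) *
        ∑ i, ∑ j, n i * n j * dot3 (v i t - v j t) (v i t - v j t))
    (E : ℝ → ℝ)
    (hE : ∀ t, E t = (1 / 2) * ∑ i, dot3 (σ i t) (σ i t) + U t)
    (hE0 : E 0 < J * (∑ i, n i) ^ 2 / (2 * N)) :
    (0 < dot3 (w 0) (w 0) - v0 ^ 2 / (J * N) * ∑ i, dot3 (σ i 0) (σ i 0)) ∧
    (∀ t, 0 ≤ t →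
      dot3 (w t) (w t) ≥
        dot3 (w 0) (w 0) - v0 ^ 2 / (J * N) * ∑ i, dot3 (σ i 0) (σ i 0)) :=
  mean_velocity_lower_bound_general N hN v0 J η hv0 hJ hη n α v σ w hw hode_v hode_σ hsphere U hU E
    hE hE0
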